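/- arXiv:1604.05256 — 3 statements merged into one kernel-verified Lean document; each statement's English description precedes it below -/
import Mathlib

section
/- In the Tanner graph of a column-weight-3 LDPC code in which every variable node is adjacent to exactly two super checks (of a 2-error correcting component code, decoded by bounded-distance decoding) and one single parity check, let T be a set of variable nodes whose induced subgraph I satisfies: (a) every check node in I has degree 1 or 3 in I; (b) every variable node of T is adjacent in I to 2 super check nodes of degree 3 and 1 single check of degree 1; (c) no two check nodes of I share a variable node outside T. Then T is a fixed set for the parallel bit flipping decoder: if exactly the variables of T are initially in error, then in every iteration the variables of T remain in error and all other variables remain correct. -/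
open Finset

variable {V C : Type*} [Fintype V] [Fintype C] [DecidableEq V] [DecidableEq C]

/-- Number of corrupt neighbors of a check `c` in state `x`. -/
def corruptNbrs (Adj : V → C → Bool) (x : V → Bool) (c : C) : ℕ :=
  (univ.filter (fun v : V => Adj v c ∧ x v = true)).card

/-- Admissible flip-message functions of the PBF decoder for check-hybrid GLDPC
codes with 2-error-correcting super checks decoded by bounded-distance decoding:
a single parity check flags all its neighbors iff the XOR (parity) of its
neighborhood is odd; a super check with at most 2 corrupt neighbors flags exactly
its corrupt neighbors; a super check with 3 or more corrupt neighbors flags no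
corrupt variable, and (BDD) flags at most 2 (necessarily correct, adjacent) variables. -/
def AdmissibleFlip (Adj : V → C → Bool) (Super : C → Bool)
    (x : V → Bool) (flip : C → V → Bool) : Prop :=
  (∀ c, Super c = false → ∀ v,
      (flip c v = true ↔ Adj v c = true ∧ Odd (corruptNbrs Adj x c))) ∧
  (∀ c, Super c = true → corruptNbrs Adj x c ≤ 2 → ∀ v,
      (flip c v = true ↔ Adj v c = true ∧ x v = true)) ∧
  (∀ c, Super c = true → 3 ≤ corruptNbrs Adj x c →
      (∀ v, flip c v = true → Adj v c = true ∧ x v = false) ∧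
      (univ.filter (fun v : V => flip c v = true)).card ≤ 2)

/-- One PBF iteration for variables of degree 3: a variable flips iff it receives
at least 2 flip messages. -/
def pbfStep3 (x : V → Bool) (flip : C → V → Bool) : V → Bool :=
  fun v => if 2 ≤ (univ.filter (fun c : C => flip c v = true)).card then !(x v) else x v

/-- Theorem (fixed set for column-weight-3 check-hybrid GLDPC codes): in a Tanner
graph where every variable is adjacent to exactly two super checks and one single
check, if a set T of variables satisfies (a) every check of the induced subgraph I
has degree 1 or 3 in I, (b) every variable of T is adjacent to two super checks of
degree 3 in I and one single check of degree 1 in I, and (c) no two checks of I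
share a variable outside T, then T is a fixed set of the PBF decoder: starting
from error pattern T, the support of the decoder state equals T after every iteration. -/
theorem stmt_6 (Adj : V → C → Bool) (Super : C → Bool)
    (hvar : ∀ v : V,
      (univ.filter (fun c : C => Adj v c = true ∧ Super c = true)).card = 2 ∧
      (univ.filter (fun c : C => Adj v c = true ∧ Super c = false)).card = 1)
    (T : Finset V)
    -- degree of a check in the induced subgraph I
    (degI : C → ℕ) (hdegI : ∀ c, degI c = (T.filter (fun v => Adj v c = true)).card)
    -- (a)
    (ha : ∀ c : C, (∃ v ∈ T, Adj v c = true) → degI c = 1 ∨ degI c = 3)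
    -- (b)
    (hb : ∀ v ∈ T, (∀ c, Adj v c = true → Super c = true → degI c = 3) ∧
                   (∀ c, Adj v c = true → Super c = false → degI c = 1))
    -- (c)
    (hc : ∀ c₁ c₂ : C, c₁ ≠ c₂ → (∃ v ∈ T, Adj v c₁ = true) →
      (∃ v ∈ T, Adj v c₂ = true) →
      ∀ u ∉ T, ¬(Adj u c₁ = true ∧ Adj u c₂ = true))
    -- decoder trajectory
    (x : ℕ → V → Bool)
    (h0 : ∀ v, x 0 v = true ↔ v ∈ T)
    (hstep : ∀ l, ∃ flip : C → V → Bool,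
      AdmissibleFlip Adj Super (x l) flip ∧ x (l + 1) = pbfStep3 (x l) flip) :
    ∀ l v, x l v = true ↔ v ∈ T := by
  intro l
  induction l with
  | zero => exact h0
  | succ l ih =>
    obtain ⟨flip, ⟨h1, h2, h3⟩, hx⟩ := hstep l
    have hcorr : ∀ c, corruptNbrs Adj (x l) c = degI c := by
      intro c
      rw [hdegI, corruptNbrs]
      congr 1
      ext v
      simp only [Finset.mem_filter, Finset.mem_univ, true_and, ih v]
      tauto
    intro v
    have hcard : (univ.filter (fun c : C => flip c v = true)).card ≤ 1 := by
      rw [Finset.card_le_one]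
      intro c₁ hc₁ c₂ hc₂
      simp only [Finset.mem_filter, Finset.mem_univ, true_and] at hc₁ hc₂
      by_cases hvT : v ∈ T
      · have key : ∀ c, flip c v = true → Adj v c = true ∧ Super c = false := by
          intro c hf
          by_cases hs : Super c = true
          · by_cases hle : corruptNbrs Adj (x l) c ≤ 2
            · have hA := (h2 c hs hle v).mp hf
              have h3' := (hb v hvT).1 c hA.1 hs
              rw [hcorr] at hle
              omega
            · have hA := (h3 c hs (by omega)).1 v hf
              have : x l v = true := (ih v).mpr hvT
              rw [hA.2] at this
              exact absurd this (by simp)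
          · have hs' : Super c = false := by
              cases h : Super c
              · rfl
              · exact absurd h hs
            exact ⟨((h1 c hs' v).mp hf).1, hs'⟩
        obtain ⟨ha1, hs1⟩ := key c₁ hc₁
        obtain ⟨ha2, hs2⟩ := key c₂ hc₂
        have hone := (hvar v).2
        obtain ⟨a, haeq⟩ := Finset.card_eq_one.mp hone
        have m1 : c₁ ∈ univ.filter (fun c : C => Adj v c = true ∧ Super c = false) := by
          simp [ha1, hs1]
        have m2 : c₂ ∈ univ.filter (fun c : C => Adj v c = true ∧ Super c = false) := by
          simp [ha2, hs2]
        rw [haeq, Finset.mem_singleton] at m1 m2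
        rw [m1, m2]
      · have key : ∀ c, flip c v = true → Adj v c = true ∧ ∃ w ∈ T, Adj w c = true := by
          intro c hf
          by_cases hs : Super c = true
          · by_cases hle : corruptNbrs Adj (x l) c ≤ 2
            · have hA := (h2 c hs hle v).mp hf
              exact absurd ((ih v).mp hA.2) hvT
            · have hA := (h3 c hs (by omega)).1 v hf
              refine ⟨hA.1, ?_⟩
              have h3d : 3 ≤ degI c := by rw [← hcorr]; omega
              rw [hdegI] at h3d
              obtain ⟨w, hw⟩ := Finset.card_pos.mp (by omega : 0 < (T.filter (fun w => Adj w c = true)).card)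
              exact ⟨w, (Finset.mem_filter.mp hw).1, (Finset.mem_filter.mp hw).2⟩
          · have hs' : Super c = false := by
              cases h : Super c
              · rfl
              · exact absurd h hs
            have hf' := (h1 c hs' v).mp hf
            refine ⟨hf'.1, ?_⟩
            have hodd := hf'.2
            rw [hcorr, hdegI] at hodd
            obtain ⟨k, hk⟩ := hodd
            obtain ⟨w, hw⟩ := Finset.card_pos.mp (by omega : 0 < (T.filter (fun w => Adj w c = true)).card)
            exact ⟨w, (Finset.mem_filter.mp hw).1, (Finset.mem_filter.mp hw).2⟩
        obtain ⟨ha1, hw1⟩ := key c₁ hc₁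
        obtain ⟨ha2, hw2⟩ := key c₂ hc₂
        by_contra hne
        exact hc c₁ c₂ hne hw1 hw2 v hvT ⟨ha1, ha2⟩
    rw [hx]
    show (if 2 ≤ (univ.filter (fun c : C => flip c v = true)).card then !(x l v) else x l v) = true ↔ v ∈ T
    rw [if_neg (by omega)]
    exact ih v
end

section
/- Consider a bipartite graph where each variable node has degree 3 and is adjacent to exactly two super checks and one single check, and suppose the super checks, when at most 2 of their variable neighbors are corrupt, send flip messages precisely to their corrupt neighbors and no others. Then for any error pattern in which every super check has at most 2 corrupt neighbors, all corrupt variable nodes receive at least 2 flip messages in the first iteration and no correct variable node receives more than 1 flip message, so the parallel bit flipping decoder corrects the error pattern in one iteration. -/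
open Finset

/-- In a Tanner graph where every variable node has degree 3 and is adjacent to
exactly two super checks and one single check, if every super check has at most
2 corrupt neighbors (so BDD succeeds and each super check flags exactly its
corrupt neighbors, while single checks flag all their neighbors iff their
parity is odd), then every corrupt variable receives at least 2 flip messages,
no correct variable receives more than 1, and the PBF decoder (a degree-3
variable flips iff it receives at least 2 flip messages) corrects the error
pattern in one iteration. -/
theorem stmt_13 {V C : Type*} [Fintype V] [Fintype C]
    [DecidableEq V] [DecidableEq C]
    (Adj : V → C → Bool) (Super : C → Bool)
    (hvar : ∀ v : V,
      (univ.filter (fun c : C => Adj v c = true ∧ Super c = true)).card = 2 ∧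
      (univ.filter (fun c : C => Adj v c = true ∧ Super c = false)).card = 1)
    (x : V → Bool)
    (hsup : ∀ c : C, Super c = true →
      (univ.filter (fun v : V => Adj v c = true ∧ x v = true)).card ≤ 2)
    (flip : C → V → Bool)
    (hflipS : ∀ c, Super c = true → ∀ v,
      (flip c v = true ↔ Adj v c = true ∧ x v = true))
    (hflipP : ∀ c, Super c = false → ∀ v,
      (flip c v = true ↔ Adj v c = true ∧
        Odd ((univ.filter (fun w : V => Adj w c = true ∧ x w = true)).card))) :
    (∀ v, x v = true → 2 ≤ (univ.filter (fun c : C => flip c v = true)).card) ∧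
    (∀ v, x v = false → (univ.filter (fun c : C => flip c v = true)).card ≤ 1) ∧
    (fun v => if 2 ≤ (univ.filter (fun c : C => flip c v = true)).card
      then !(x v) else x v) = fun _ => false := by
  have h1 : ∀ v, x v = true → 2 ≤ (univ.filter (fun c : C => flip c v = true)).card := by
    intro v hv
    have hsub : univ.filter (fun c : C => Adj v c = true ∧ Super c = true) ⊆
        univ.filter (fun c : C => flip c v = true) := by
      intro c hc
      simp only [mem_filter, mem_univ, true_and] at hc ⊢
      exact (hflipS c hc.2 v).mpr ⟨hc.1, hv⟩
    calc 2 = (univ.filter (fun c : C => Adj v c = true ∧ Super c = true)).card :=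
          (hvar v).1.symm
      _ ≤ _ := card_le_card hsub
  have h2 : ∀ v, x v = false → (univ.filter (fun c : C => flip c v = true)).card ≤ 1 := by
    intro v hv
    have hsub : univ.filter (fun c : C => flip c v = true) ⊆
        univ.filter (fun c : C => Adj v c = true ∧ Super c = false) := by
      intro c hc
      simp only [mem_filter, mem_univ, true_and] at hc ⊢
      cases hS : Super c with
      | false => exact ⟨((hflipP c hS v).mp hc).1, rfl⟩
      | true =>
          exfalso
          have := ((hflipS c hS v).mp hc).2
          rw [hv] at this; exact Bool.false_ne_true this
    calc (univ.filter (fun c : C => flip c v = true)).card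
        ≤ (univ.filter (fun c : C => Adj v c = true ∧ Super c = false)).card :=
          card_le_card hsub
      _ = 1 := (hvar v).2
  refine ⟨h1, h2, ?_⟩
  funext v
  cases hv : x v with
  | true => simp [h1 v hv]
  | false =>
      have := h2 v hv
      rw [if_neg (by omega)]
end

section
/- Let T be a set of variable nodes in a column-weight-4 Tanner graph with induced subgraph I such that: (a) every check node in I has degree 1 or 3; (b) every variable node of T is adjacent in I to 3 check nodes of degree 3 (all super checks of a 2-error correcting component code using BDD) and 1 check node of degree 1; (c) no two check nodes of I share a variable node outside T. Then T is a fixed set for the parallel bit flipping decoder. -/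
open Finset

variable {V C : Type*} [Fintype V] [Fintype C] [DecidableEq V] [DecidableEq C]

/-- Number of corrupt neighbors of a check `c` in state `x`. -/
def corruptNbrs4 (Adj : V → C → Bool) (x : V → Bool) (c : C) : ℕ :=
  (univ.filter (fun v : V => Adj v c ∧ x v = true)).card

/-- Admissible flip-message functions of the PBF decoder for check-hybrid GLDPC
codes with 2-error-correcting super checks decoded by BDD: single checks flag
all neighbors iff their parity is odd; a super check with at most 2 corrupt
neighbors flags exactly its corrupt neighbors; a super check with 3 or more
corrupt neighbors flags no corrupt variable and at most 2 (adjacent, correct)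
variables. -/
def AdmissibleFlip4 (Adj : V → C → Bool) (Super : C → Bool)
    (x : V → Bool) (flip : C → V → Bool) : Prop :=
  (∀ c, Super c = false → ∀ v,
      (flip c v = true ↔ Adj v c = true ∧ Odd (corruptNbrs4 Adj x c))) ∧
  (∀ c, Super c = true → corruptNbrs4 Adj x c ≤ 2 → ∀ v,
      (flip c v = true ↔ Adj v c = true ∧ x v = true)) ∧
  (∀ c, Super c = true → 3 ≤ corruptNbrs4 Adj x c →
      (∀ v, flip c v = true → Adj v c = true ∧ x v = false) ∧
      (univ.filter (fun v : V => flip c v = true)).card ≤ 2)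

/-- One PBF iteration for variables of degree 4: a variable flips iff it receives
more than 2 flip messages. -/
def pbfStep4 (x : V → Bool) (flip : C → V → Bool) : V → Bool :=
  fun v => if 3 ≤ (univ.filter (fun c : C => flip c v = true)).card then !(x v) else x v

/-- Fixed set for column-weight-4 check-hybrid GLDPC codes: in a Tanner graph
where every variable is adjacent to exactly three super checks and one single
check, if a set T of variables satisfies (a) every check of the induced subgraph
I has degree 1 or 3 in I, (b) every variable of T is adjacent to three super
checks of degree 3 in I and one single check of degree 1 in I, and (c) no two
checks of I share a variable outside T, then T is a fixed set of the PBF decoder. -/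
theorem stmt_15 (Adj : V → C → Bool) (Super : C → Bool)
    (hvar : ∀ v : V,
      (univ.filter (fun c : C => Adj v c = true ∧ Super c = true)).card = 3 ∧
      (univ.filter (fun c : C => Adj v c = true ∧ Super c = false)).card = 1)
    (T : Finset V)
    (degI : C → ℕ) (hdegI : ∀ c, degI c = (T.filter (fun v => Adj v c = true)).card)
    (ha : ∀ c : C, (∃ v ∈ T, Adj v c = true) → degI c = 1 ∨ degI c = 3)
    (hb : ∀ v ∈ T, (∀ c, Adj v c = true → Super c = true → degI c = 3) ∧
                   (∀ c, Adj v c = true → Super c = false → degI c = 1))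
    (hc : ∀ c₁ c₂ : C, c₁ ≠ c₂ → (∃ v ∈ T, Adj v c₁ = true) →
      (∃ v ∈ T, Adj v c₂ = true) →
      ∀ u ∉ T, ¬(Adj u c₁ = true ∧ Adj u c₂ = true))
    (x : ℕ → V → Bool)
    (h0 : ∀ v, x 0 v = true ↔ v ∈ T)
    (hstep : ∀ l, ∃ flip : C → V → Bool,
      AdmissibleFlip4 Adj Super (x l) flip ∧ x (l + 1) = pbfStep4 (x l) flip) :
    ∀ l v, x l v = true ↔ v ∈ T := by
  intro l
  induction l with
  | zero => exact h0
  | succ l ih =>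
    obtain ⟨flip, ⟨hsingle, hsup2, hsup3⟩, hx⟩ := hstep l
    have hcn : ∀ c, corruptNbrs4 Adj (x l) c = degI c := by
      intro c
      rw [hdegI, corruptNbrs4]
      congr 1
      ext u
      simp only [mem_filter, mem_univ, true_and]
      constructor
      · rintro ⟨h1, h2⟩; exact ⟨(ih u).mp h2, h1⟩
      · rintro ⟨h1, h2⟩; exact ⟨h2, (ih u).mpr h1⟩
    intro v
    have hsender : ∀ c, flip c v = true → Adj v c = true := by
      intro c hf
      by_cases hs : Super c = true
      · by_cases h2 : corruptNbrs4 Adj (x l) c ≤ 2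
        · exact ((hsup2 c hs h2 v).mp hf).1
        · exact ((hsup3 c hs (by omega)).1 v hf).1
      · exact ((hsingle c (by simpa using hs) v).mp hf).1
    have hcard : (univ.filter (fun c : C => flip c v = true)).card ≤ 1 := by
      by_cases hvT : v ∈ T
      · -- every sender is a single check adjacent to v
        have hsub : univ.filter (fun c : C => flip c v = true) ⊆
            univ.filter (fun c : C => Adj v c = true ∧ Super c = false) := by
          intro c hcmem
          simp only [mem_filter, mem_univ, true_and] at hcmem ⊢
          have hadj := hsender c hcmem
          refine ⟨hadj, ?_⟩
          by_contra hns
          have hs : Super c = true := by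
            cases hsc : Super c with
            | false => exact absurd hsc hns
            | true => rfl
          have hdeg3 : degI c = 3 := (hb v hvT).1 c hadj hs
          have h3 : 3 ≤ corruptNbrs4 Adj (x l) c := by rw [hcn]; omega
          have := ((hsup3 c hs h3).1 v hcmem).2
          rw [(ih v).mpr hvT] at this
          exact absurd this (by simp)
        calc (univ.filter (fun c : C => flip c v = true)).card
            ≤ _ := Finset.card_le_card hsub
          _ = 1 := (hvar v).2
      · -- v outside T: every sender is a check of I; at most one such check touches v
        have hxv : x l v = false := by
          cases hxl : x l v with
          | false => rfl
          | true => exact absurd ((ih v).mp hxl) hvT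
        have hI : ∀ c, flip c v = true → ∃ u ∈ T, Adj u c = true := by
          intro c hf
          have hpos : 0 < degI c := by
            by_cases hs : Super c = true
            · by_cases h2 : corruptNbrs4 Adj (x l) c ≤ 2
              · have := ((hsup2 c hs h2 v).mp hf).2
                rw [hxv] at this; exact absurd this (by simp)
              · rw [← hcn]; omega
            · have hodd := ((hsingle c (by simpa using hs) v).mp hf).2
              rw [hcn] at hodd
              rcases Nat.eq_zero_or_pos (degI c) with h | h
              · rw [h] at hodd; exact absurd hodd (by simp)
              · exact h
          rw [hdegI] at hpos
          obtain ⟨u, hu⟩ := Finset.card_pos.mp hpos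
          simp only [mem_filter] at hu
          exact ⟨u, hu.1, hu.2⟩
        apply Finset.card_le_one.mpr
        intro c₁ h1 c₂ h2
        simp only [mem_filter, mem_univ, true_and] at h1 h2
        by_contra hne
        exact hc c₁ c₂ hne (hI c₁ h1) (hI c₂ h2) v hvT ⟨hsender c₁ h1, hsender c₂ h2⟩
    have : x (l + 1) v = x l v := by
      rw [hx]
      show (if 3 ≤ (univ.filter (fun c : C => flip c v = true)).card
          then !(x l v) else x l v) = x l v
      rw [if_neg (by omega)]
    rw [this]
    exact ih v
end
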